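/- Let n ≥ 3 and let T be the n × n tridiagonal 0–1 Toeplitz matrix with T_{i,j} = 1 if |i − j| = 1 and T_{i,j} = 0 otherwise. For σ ∈ S_n define: k(σ) = the length of the cycle of σ containing 1 (with k(σ) = 1 if 1 is a fixed point); ℓ(σ) = the total number of cycles of σ, counting fixed points as cycles of length 1; N(σ) = the number of permutations in S_n having the same cycle type as σ; and c_σ = (−1)^{n − ℓ(σ)} · N(σ) if k(σ) = 1, c_σ = (−1)^{n − 1 − ℓ(σ)} · N(σ) if k(σ) = 2, and c_σ = 0 if k(σ) > 2. Then Σ_{σ ∈ S_n} c_σ · ∏_{i=1}^n T_{i,σ(i)} = −(−1/2)^{n/2} · n!/(n/2)! if n is even, and Σ_{σ ∈ S_n} c_σ · ∏_{i=1}^n T_{i,σ(i)} = 0 if n is odd, the sum being taken in ℚ. -/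

import Mathlib

/-- The cycle type of a permutation including fixed points as cycles of length `1`:
Mathlib's `cycleType` (the lengths of the nontrivial cycles) together with one part `1`
for each fixed point. -/
noncomputable def fullCycleType {n : ℕ} (σ : Equiv.Perm (Fin n)) : Multiset ℕ :=
  σ.cycleType + Multiset.replicate (n - σ.cycleType.sum) 1

open Classical in
/-- The number of permutations in `S_n` having the same cycle type
(fixed points included) as `σ`. -/
noncomputable def numSameCycleType {n : ℕ} (σ : Equiv.Perm (Fin n)) : ℕ :=
  (Finset.univ.filter
    (fun τ : Equiv.Perm (Fin n) => fullCycleType τ = fullCycleType σ)).card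

/-- The `n × n` tridiagonal 0–1 Toeplitz matrix: `T i j = 1` iff `|i − j| = 1`. -/
def triToeplitz (n : ℕ) : Matrix (Fin n) (Fin n) ℚ :=
  fun i j => if (i : ℕ) + 1 = (j : ℕ) ∨ (j : ℕ) + 1 = (i : ℕ) then 1 else 0

/-!
The product `∏ i, T i (σ i)` is `1` when `σ` moves every vertex of the path `0 — 1 — ⋯ — (n-1)`
to a neighbour, and `0` otherwise. Such a `σ` must send `0 ↦ 1`, hence `2 ↦ 3` (as `1` is taken),
and so on, while `σ⁻¹` has the same property; so it exists only for even `n` and is then the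
perfect matching `(0 1)(2 3)⋯`. Only this term survives: its cycle through `0` has length `2`,
it has `n/2` cycles, and there are `n! / (2^(n/2) (n/2)!)` permutations of its cycle type.
-/

open Equiv Finset SimpleGraph

namespace Equiv.Perm

theorem range_pow_apply_eq_pair {α : Type*} {σ : Perm α} (hσ : σ ^ 2 = 1) (a : α) :
    Set.range (fun m : ℕ => (σ ^ m) a) = {a, σ a} := by
  have hpow : ∀ m : ℕ, (σ ^ m) a = if Even m then a else σ a := by
    intro m
    obtain ⟨c, rfl | rfl⟩ := Nat.even_or_odd' m
    · simp [pow_mul, hσ]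
    · simp [pow_succ, pow_mul, hσ]
  ext j
  simp only [Set.mem_range, hpow, Set.mem_insert_iff, Set.mem_singleton_iff]
  constructor
  · rintro ⟨m, rfl⟩
    split_ifs <;> simp
  · rintro (rfl | rfl)
    exacts [⟨0, by simp⟩, ⟨1, by simp⟩]

theorem natCard_range_pow_apply_eq_two {α : Type*} {σ : Perm α} (hσ : σ ^ 2 = 1) {a : α}
    (ha : σ a ≠ a) : Nat.card (Set.range fun m : ℕ => (σ ^ m) a) = 2 := by
  rw [range_pow_apply_eq_pair hσ, Nat.card_coe_set_eq, Set.ncard_pair ha.symm]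

variable {α : Type*} [Fintype α] [DecidableEq α]

theorem sum_cycleType_of_forall_ne {σ : Perm α} (hfree : ∀ x, σ x ≠ x) :
    σ.cycleType.sum = Fintype.card α := by
  rw [sum_cycleType, eq_univ_of_forall fun x => mem_support.2 (hfree x), card_univ]

theorem cycleType_eq_replicate_two {σ : Perm α} (hσ : σ ^ 2 = 1) (hfree : ∀ x, σ x ≠ x) :
    σ.cycleType = Multiset.replicate (Fintype.card α / 2) 2 := by
  have hsum := sum_cycleType_of_forall_ne hfree
  rw [cycleType_of_pow_prime_eq_one hσ] at hsum ⊢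
  rw [Multiset.sum_replicate, smul_eq_mul] at hsum
  rw [← hsum, Nat.mul_div_cancel _ two_pos]

end Equiv.Perm

section CycleType

variable {n : ℕ}

theorem fullCycleType_eq_fullCycleType_iff {σ τ : Perm (Fin n)} :
    fullCycleType τ = fullCycleType σ ↔ τ.cycleType = σ.cycleType := by
  refine ⟨fun h => ?_, fun h => by rw [fullCycleType, fullCycleType, h]⟩
  have key : ∀ ρ : Perm (Fin n), (fullCycleType ρ).filter (2 ≤ ·) = ρ.cycleType := fun ρ => by
    rw [fullCycleType, Multiset.filter_add,
      Multiset.filter_eq_self.2 fun a ha => Perm.two_le_of_mem_cycleType ha,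
      Multiset.filter_eq_nil.2 fun a ha => by simp [Multiset.eq_of_mem_replicate ha], add_zero]
  rw [← key τ, ← key σ, h]

theorem numSameCycleType_mul_eq (σ : Perm (Fin n)) :
    numSameCycleType σ * ((n - σ.cycleType.sum).factorial * σ.cycleType.prod *
      ∏ m ∈ σ.cycleType.toFinset, (σ.cycleType.count m).factorial) = n.factorial := by
  have h := Perm.card_of_cycleType_mul_eq (Fin n) σ.cycleType
  rw [if_pos ⟨σ.sum_cycleType_le, fun a ha => Perm.two_le_of_mem_cycleType ha⟩,
    Fintype.card_fin] at h
  convert h using 3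
  simp only [numSameCycleType, fullCycleType_eq_fullCycleType_iff]

variable {σ : Perm (Fin n)}

theorem numSameCycleType_mul_of_sq_eq_one (hσ : σ ^ 2 = 1) (hfree : ∀ x, σ x ≠ x) :
    numSameCycleType σ * (2 ^ (n / 2) * (n / 2).factorial) = n.factorial := by
  have h := numSameCycleType_mul_eq σ
  rw [Perm.sum_cycleType_of_forall_ne hfree, Perm.cycleType_eq_replicate_two hσ hfree,
    Fintype.card_fin, Nat.sub_self, Nat.factorial_zero, one_mul, Multiset.prod_replicate,
    Multiset.toFinset_replicate] at h
  split_ifs at h with hk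
  · simpa [hk] using h
  · simpa [Multiset.count_replicate_self] using h

theorem card_fullCycleType_of_sq_eq_one (hσ : σ ^ 2 = 1) (hfree : ∀ x, σ x ≠ x) :
    Multiset.card (fullCycleType σ) = n / 2 := by
  rw [fullCycleType, Perm.sum_cycleType_of_forall_ne hfree, Fintype.card_fin, Nat.sub_self,
    Multiset.replicate_zero, add_zero, Perm.cycleType_eq_replicate_two hσ hfree,
    Multiset.card_replicate, Fintype.card_fin]

end CycleType

namespace SimpleGraph

variable {V : Type*}

theorem prod_adjMatrix_apply_perm {R : Type*} [Fintype V] [CommSemiring R] (G : SimpleGraph V)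
    [DecidableRel G.Adj]
    (σ : Perm V) : ∏ i, G.adjMatrix R i (σ i) = if ∀ i, G.Adj i (σ i) then 1 else 0 := by
  simp [adjMatrix_apply, prod_boole]

theorem forall_adj_perm_inv {G : SimpleGraph V} {σ : Perm V} (hσ : ∀ i, G.Adj i (σ i)) :
    ∀ j, G.Adj j (σ⁻¹ j) := fun j => by
  simpa using (hσ (σ⁻¹ j)).symm

end SimpleGraph

open Classical in
theorem triToeplitz_eq_adjMatrix (n : ℕ) : triToeplitz n = (pathGraph n).adjMatrix ℚ := by
  ext i j
  simp only [triToeplitz, adjMatrix_apply, pathGraph_adj]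

section PathGraph

variable {n : ℕ} {σ : Perm (Fin n)}

theorem val_perm_two_mul_of_forall_pathGraph_adj (hσ : ∀ i, (pathGraph n).Adj i (σ i))
    (c : ℕ) (hc : 2 * c < n) : (σ ⟨2 * c, hc⟩ : ℕ) = 2 * c + 1 := by
  induction c with
  | zero =>
    have h := pathGraph_adj.1 (hσ ⟨2 * 0, hc⟩)
    dsimp only at h
    omega
  | succ c ih =>
    rcases pathGraph_adj.1 (hσ ⟨2 * (c + 1), hc⟩) with h | h
    · exact h.symm
    · dsimp only at h
      have heq : σ ⟨2 * (c + 1), hc⟩ = σ ⟨2 * c, by omega⟩ :=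
        Fin.ext (by have := ih (by omega); omega)
      have := congrArg Fin.val (σ.injective heq)
      dsimp only at this
      omega

theorem val_perm_two_mul_add_one_of_forall_pathGraph_adj (hσ : ∀ i, (pathGraph n).Adj i (σ i))
    (c : ℕ) (hc : 2 * c + 1 < n) : (σ ⟨2 * c + 1, hc⟩ : ℕ) = 2 * c := by
  have h : σ⁻¹ ⟨2 * c, by omega⟩ = ⟨2 * c + 1, hc⟩ :=
    Fin.ext (val_perm_two_mul_of_forall_pathGraph_adj (forall_adj_perm_inv hσ) c _)
  rw [← h]
  simp

theorem even_of_forall_pathGraph_adj (hσ : ∀ i, (pathGraph n).Adj i (σ i)) : Even n := by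
  by_contra hodd
  obtain ⟨c, rfl⟩ := Nat.not_even_iff_odd.1 hodd
  have := val_perm_two_mul_of_forall_pathGraph_adj hσ c (by omega)
  omega

theorem perm_eq_of_forall_pathGraph_adj {τ : Perm (Fin n)} (hσ : ∀ i, (pathGraph n).Adj i (σ i))
    (hτ : ∀ i, (pathGraph n).Adj i (τ i)) : σ = τ := by
  ext ⟨i, hi⟩
  obtain ⟨c, rfl | rfl⟩ := Nat.even_or_odd' i
  · rw [val_perm_two_mul_of_forall_pathGraph_adj hσ c hi,
      val_perm_two_mul_of_forall_pathGraph_adj hτ c hi]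
  · rw [val_perm_two_mul_add_one_of_forall_pathGraph_adj hσ c hi,
      val_perm_two_mul_add_one_of_forall_pathGraph_adj hτ c hi]

theorem sq_eq_one_of_forall_pathGraph_adj (hσ : ∀ i, (pathGraph n).Adj i (σ i)) : σ ^ 2 = 1 := by
  rw [sq, ← inv_eq_iff_mul_eq_one]
  exact perm_eq_of_forall_pathGraph_adj (forall_adj_perm_inv hσ) hσ

theorem exists_perm_forall_pathGraph_adj (hn : Even n) :
    ∃ σ : Perm (Fin n), ∀ i, (pathGraph n).Adj i (σ i) := by
  obtain ⟨k, rfl⟩ := hn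
  let f : Fin (k + k) → Fin (k + k) := fun i =>
    if h : (i : ℕ) % 2 = 0 then ⟨(i : ℕ) + 1, by omega⟩ else ⟨(i : ℕ) - 1, by omega⟩
  have hf : ∀ i, (f i : ℕ) = if (i : ℕ) % 2 = 0 then (i : ℕ) + 1 else (i : ℕ) - 1 := fun i => by
    simp only [f]
    split_ifs <;> rfl
  have hinv : Function.Involutive f := fun i => Fin.ext (by rw [hf, hf]; split_ifs <;> omega)
  refine ⟨hinv.toPerm, fun i => pathGraph_adj.2 ?_⟩
  simp only [Function.Involutive.coe_toPerm, hf]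
  split_ifs <;> omega

open Classical in
theorem filter_forall_pathGraph_adj_eq_singleton (hσ : ∀ i, (pathGraph n).Adj i (σ i)) :
    univ.filter (fun τ : Perm (Fin n) => ∀ i, (pathGraph n).Adj i (τ i)) = {σ} :=
  eq_singleton_iff_unique_mem.2
    ⟨mem_filter.2 ⟨mem_univ σ, hσ⟩,
      fun _ hτ => perm_eq_of_forall_pathGraph_adj (mem_filter.1 hτ).2 hσ⟩

end PathGraph

open Classical in
/-- For `n ≥ 3`, the quasi-immanant `QImm_Ψ^{S_{(2,1^{n-2})}}` of the tridiagonal 0–1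
Toeplitz matrix, with coefficients `c_σ` given by the main theorem of the paper
(`k(σ)` the length of the cycle of `σ` containing the first point, `ℓ(σ)` the total
number of cycles counting fixed points, `N(σ)` the number of permutations with the same
cycle type as `σ`), equals `−(−1/2)^{n/2} n!/(n/2)!` when `n` is even and `0` when `n`
is odd. -/
theorem quasiImmanant_triToeplitz (n : ℕ) (hn : 3 ≤ n) :
    ∑ σ : Equiv.Perm (Fin n),
        (if Nat.card {j : Fin n // ∃ m : ℕ, (σ ^ m) (⟨0, by omega⟩ : Fin n) = j} = 1 then
            (-1 : ℚ) ^ (n - Multiset.card (fullCycleType σ)) * (numSameCycleType σ : ℚ)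
          else if Nat.card {j : Fin n // ∃ m : ℕ, (σ ^ m) (⟨0, by omega⟩ : Fin n) = j} = 2 then
            (-1 : ℚ) ^ (n - 1 - Multiset.card (fullCycleType σ)) * (numSameCycleType σ : ℚ)
          else 0) *
          ∏ i : Fin n, triToeplitz n i (σ i) =
      if Even n then
        -(-(1 : ℚ) / 2) ^ (n / 2) * ((n.factorial : ℚ) / ((n / 2).factorial : ℚ))
      else 0 := by
  simp only [triToeplitz_eq_adjMatrix, prod_adjMatrix_apply_perm, mul_ite, mul_one, mul_zero]
  rw [← sum_filter]
  split_ifs with hn_even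
  · obtain ⟨σ₀, hσ₀⟩ := exists_perm_forall_pathGraph_adj hn_even
    have hsq := sq_eq_one_of_forall_pathGraph_adj hσ₀
    have hfree : ∀ x, σ₀ x ≠ x := fun x => (hσ₀ x).ne'
    have horbit : Nat.card {j : Fin n // ∃ m : ℕ, (σ₀ ^ m) ⟨0, by omega⟩ = j} = 2 :=
      Perm.natCard_range_pow_apply_eq_two hsq (hfree _)
    have hcount : (numSameCycleType σ₀ : ℚ) * (2 ^ (n / 2) * (n / 2).factorial) = n.factorial :=
      mod_cast numSameCycleType_mul_of_sq_eq_one hsq hfree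
    rw [filter_forall_pathGraph_adj_eq_singleton hσ₀, sum_singleton, horbit,
      card_fullCycleType_of_sq_eq_one hsq hfree,
      if_neg (by norm_num), if_pos rfl, ← hcount]
    obtain ⟨k, rfl⟩ := hn_even
    obtain ⟨j, rfl⟩ : ∃ j, k = j + 1 := ⟨k - 1, by omega⟩
    rw [show (j + 1 + (j + 1)) / 2 = j + 1 by omega,
      show j + 1 + (j + 1) - 1 - (j + 1) = j by omega, div_pow]
    field_simp
    ring
  · rw [filter_false_of_mem fun σ _ hσ => hn_even (even_of_forall_pathGraph_adj hσ), sum_empty]
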